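/- Let $\sigma(z)=1/(1+e^{-z})$ be the sigmoid. Then the function $f(z)=z\sigma(z)$ satisfies $\sup_{z\in\mathbb R}|f'(z)|\le 1.1$, and consequently $|f(x)-f(y)|\le 1.1|x-y|$ for all $x,y\in\mathbb R$. -/

import Mathlib

/-!
Since `σ' = σ (1 - σ)`, the derivative of `f(z) = z σ(z)` is `σ + z σ (1 - σ)`, which with
`e = exp (-z)` equals `(1 + e + z e) / (1 + e)²`. The tangent-line bound `x + 1 ≤ exp x` at
`x = z - 12/5` gives `z e ≤ 7/5 e + exp (-12/5) ≤ 7/5 e + 1/11`, and then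
`11/10 (1 + e)² - (1 + e + z e) ≥ 11/10 (e - 1/11)² ≥ 0`. The lower bound `f' ≥ -1/10` follows
from `f(z) - f(-z) = z`, i.e. `f'(z) + f'(-z) = 1`. The Lipschitz estimate is the mean value
theorem.
-/

open Real

lemma mul_exp_neg_le (c z : ℝ) : z * exp (-z) ≤ (c - 1) * exp (-z) + exp (-c) := by
  have tangent := mul_le_mul_of_nonneg_right (add_one_le_exp (z - c)) (exp_pos (-z)).le
  rw [← exp_add, show z - c + -z = -c by ring] at tangent
  linarith

lemma eleven_le_exp_twelve_fifths : (11 : ℝ) ≤ exp (12 / 5) := by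
  have h : exp (12 / 5) ^ 5 = exp 1 ^ 12 := by
    rw [← exp_nat_mul, ← exp_nat_mul]; norm_num
  refine le_of_pow_le_pow_left₀ (by norm_num) (exp_pos _).le (n := 5) ?_
  calc (11 : ℝ) ^ 5 ≤ 2.7182818283 ^ 12 := by norm_num
    _ ≤ exp 1 ^ 12 := pow_le_pow_left₀ (by norm_num) exp_one_gt_d9.le 12
    _ = exp (12 / 5) ^ 5 := h.symm

noncomputable def swish (z : ℝ) : ℝ := z * sigmoid z

lemma hasDerivAt_swish (z : ℝ) :
    HasDerivAt swish (sigmoid z + z * sigmoid z * (1 - sigmoid z)) z := by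
  have h := (hasDerivAt_id' z).mul (hasDerivAt_sigmoid z)
  rwa [one_mul, ← mul_assoc] at h

lemma differentiable_swish : Differentiable ℝ swish :=
  fun z => (hasDerivAt_swish z).differentiableAt

lemma deriv_swish (z : ℝ) : deriv swish z = sigmoid z + z * sigmoid z * (1 - sigmoid z) :=
  (hasDerivAt_swish z).deriv

lemma deriv_swish_add_deriv_swish_neg (z : ℝ) : deriv swish z + deriv swish (-z) = 1 := by
  rw [deriv_swish, deriv_swish, sigmoid_neg]
  ring

lemma deriv_swish_le (z : ℝ) : deriv swish z ≤ 11 / 10 := by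
  set e := exp (-z)
  have he : 0 < e := exp_pos _
  have hze : z * e ≤ 7 / 5 * e + 1 / 11 := by
    have hc : exp (-(12 / 5)) ≤ 1 / 11 := by
      rw [exp_neg, one_div]
      exact inv_anti₀ (by norm_num) eleven_le_exp_twelve_fifths
    linarith [mul_exp_neg_le (12 / 5) z]
  have hformula : deriv swish z = (1 + e + z * e) / (1 + e) ^ 2 := by
    rw [deriv_swish, sigmoid_def]
    field_simp
    ring
  rw [hformula, div_le_iff₀ (by positivity)]
  nlinarith [sq_nonneg (e - 1 / 11)]

lemma abs_deriv_swish_le (z : ℝ) : |deriv swish z| ≤ 11 / 10 :=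
  abs_le.mpr ⟨by linarith [deriv_swish_add_deriv_swish_neg z, deriv_swish_le (-z)],
    deriv_swish_le z⟩

lemma abs_swish_sub_swish_le (x y : ℝ) : |swish x - swish y| ≤ 11 / 10 * |x - y| := by
  simpa only [Real.norm_eq_abs] using
    convex_univ.norm_image_sub_le_of_norm_deriv_le (fun w _ => differentiable_swish w)
      (fun w _ => abs_deriv_swish_le w) (Set.mem_univ y) (Set.mem_univ x)

/-- Derivative bound for the Swish function `f(z) = z σ(z)`, `σ` the sigmoid, and the
resulting Lipschitz estimate with constant `1.1`. -/
theorem swish_deriv_bound :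
    (∀ z : ℝ, |deriv (fun z : ℝ => z * (1 / (1 + Real.exp (-z)))) z| ≤ 1.1) ∧
    (∀ x y : ℝ, |x * (1 / (1 + Real.exp (-x))) - y * (1 / (1 + Real.exp (-y)))| ≤
      1.1 * |x - y|) := by
  simp only [one_div, ← sigmoid_def]
  change (∀ z, |deriv swish z| ≤ 1.1) ∧ ∀ x y, |swish x - swish y| ≤ 1.1 * |x - y|
  norm_num only
  exact ⟨abs_deriv_swish_le, abs_swish_sub_swish_le⟩
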